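/- arXiv:2403.04841 — 5 statements merged into one kernel-verified Lean document; each statement's English description precedes it below -/
import Mathlib

section
/- Let n, q, m be natural numbers with q ≤ n. For each i ∈ Fin m, let C_i ⊆ Fin n be a set of at most q qubits, let h_i be a PSD complex matrix indexed by (C_i → Fin 2), and let H_i be the (Fin n → Fin 2)-indexed matrix that is C_i-local with local part h_i. If Σ_{i ∈ Fin m} H_i ≼ I (the identity on ℂ^{2^n}), then Σ_{i ∈ Fin m} trace(h_i) ≤ 2^q, and consequently Σ_{i ∈ Fin m} ‖H_i‖ ≤ 2^q. -/
open Matrix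
open scoped Matrix.Norms.L2Operator ComplexOrder

/-- `H` is `S`-local with local part `h`: under the canonical bijection
`(Fin n → Fin 2) ≃ (S → Fin 2) × (Sᶜ → Fin 2)`, `H` corresponds to `h ⊗ₖ I`.
Entrywise: `H x y = h (x|_S) (y|_S)` if `x` and `y` agree outside `S`, and `0` otherwise. -/
def Matrix.IsLocalOn {n : ℕ} (S : Finset (Fin n))
    (h : Matrix ({i // i ∈ S} → Fin 2) ({i // i ∈ S} → Fin 2) ℂ)
    (H : Matrix (Fin n → Fin 2) (Fin n → Fin 2) ℂ) : Prop :=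
  ∀ x y : Fin n → Fin 2,
    H x y = h (fun i => x i.1) (fun i => y i.1) *
      (if ∀ i ∉ S, x i = y i then 1 else 0)

/-!
Taking traces in `∑ H_i ≼ I` gives `∑ 2^(n - |C_i|) tr h_i ≤ 2^n`, because `H_i ≅ h_i ⊗ I` with
an identity factor of dimension `2^(n - |C_i|) ≥ 2^(n - q)`. For the norms: a PSD matrix lies
below its trace times the identity (its largest eigenvalue is at most the sum of all of them),
`h ↦ h ⊗ I` preserves this Loewner bound, and a PSD matrix below `c • I` has norm at most `c`.
-/

open scoped MatrixOrder Kronecker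

namespace Matrix

section PosSemidef

variable {𝕜 n : Type*} [RCLike 𝕜] [Fintype n] {A : Matrix n n 𝕜}

theorem PosSemidef.re_trace_nonneg (hA : A.PosSemidef) : 0 ≤ RCLike.re A.trace :=
  (RCLike.nonneg_iff.1 hA.trace_nonneg).1

theorem PosSemidef.le_algebraMap_re_trace [DecidableEq n] (hA : A.PosSemidef) :
    A ≤ algebraMap ℝ (Matrix n n 𝕜) (RCLike.re A.trace) := by
  refine le_algebraMap_of_spectrum_le fun x hx => ?_
  rw [hA.1.spectrum_real_eq_range_eigenvalues] at hx
  obtain ⟨i, rfl⟩ := hx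
  rw [hA.1.trace_eq_sum_eigenvalues, ← RCLike.ofReal_sum, RCLike.ofReal_re]
  exact Finset.single_le_sum (fun j _ => hA.eigenvalues_nonneg j) (Finset.mem_univ i)

end PosSemidef

section KroneckerOne

variable {α β γ : Type*} (e : γ ≃ α × β)

theorem trace_submatrix_kronecker_one {R : Type*} [Semiring R] [Fintype α] [Fintype β]
    [DecidableEq β] [Fintype γ] (h : Matrix α α R) :
    ((h ⊗ₖ (1 : Matrix β β R)).submatrix e e).trace = h.trace * Fintype.card β :=
  calc ((h ⊗ₖ (1 : Matrix β β R)).submatrix e e).trace = (h ⊗ₖ (1 : Matrix β β R)).trace :=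
        e.sum_comp fun p => (h ⊗ₖ (1 : Matrix β β R)) p p
    _ = h.trace * Fintype.card β := by rw [trace_kronecker, trace_one]

variable {𝕜 : Type*} [RCLike 𝕜]

theorem submatrix_kronecker_one_mono [Fintype α] [Fintype β] [DecidableEq β]
    {h h' : Matrix α α 𝕜} (hle : h ≤ h') :
    (h ⊗ₖ (1 : Matrix β β 𝕜)).submatrix e e ≤ (h' ⊗ₖ (1 : Matrix β β 𝕜)).submatrix e e := by
  have hsub : (h' ⊗ₖ (1 : Matrix β β 𝕜)).submatrix e e - (h ⊗ₖ (1 : Matrix β β 𝕜)).submatrix e e =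
      ((h' - h) ⊗ₖ (1 : Matrix β β 𝕜)).submatrix e e := by
    ext
    simp [sub_mul]
  rw [le_iff, hsub]
  exact ((le_iff.1 hle).kronecker PosSemidef.one).submatrix e

theorem submatrix_kronecker_one_algebraMap [Fintype α] [DecidableEq α] [Fintype β]
    [DecidableEq β] [Fintype γ] [DecidableEq γ] (r : ℝ) :
    (algebraMap ℝ (Matrix α α 𝕜) r ⊗ₖ (1 : Matrix β β 𝕜)).submatrix e e =
      algebraMap ℝ (Matrix γ γ 𝕜) r := by
  rw [Algebra.algebraMap_eq_smul_one, Algebra.algebraMap_eq_smul_one, smul_kronecker,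
    one_kronecker_one]
  exact congrArg (fun M : Matrix γ γ 𝕜 => r • M) (submatrix_one_equiv e)

end KroneckerOne

namespace IsLocalOn

variable {N : ℕ} {S : Finset (Fin N)} {h : Matrix ({i // i ∈ S} → Fin 2) ({i // i ∈ S} → Fin 2) ℂ}
  {H : Matrix (Fin N → Fin 2) (Fin N → Fin 2) ℂ}

theorem eq_submatrix_kronecker (hloc : IsLocalOn S h H) :
    H = (h ⊗ₖ (1 : Matrix ({i // i ∉ S} → Fin 2) ({i // i ∉ S} → Fin 2) ℂ)).submatrix
      (Equiv.piEquivPiSubtypeProd (· ∈ S) _) (Equiv.piEquivPiSubtypeProd (· ∈ S) _) := by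
  ext x y
  rw [hloc x y, submatrix_apply, kroneckerMap_apply, one_apply]
  congr 1
  exact if_congr (by simp [funext_iff]) rfl rfl

theorem posSemidef (hloc : IsLocalOn S h H) (hh : h.PosSemidef) : H.PosSemidef := by
  rw [hloc.eq_submatrix_kronecker]
  exact (hh.kronecker PosSemidef.one).submatrix _

theorem trace_eq (hloc : IsLocalOn S h H) : H.trace = h.trace * 2 ^ (N - S.card) := by
  rw [hloc.eq_submatrix_kronecker, trace_submatrix_kronecker_one, Fintype.card_fun,
    Fintype.card_fin, Fintype.card_subtype_compl, Fintype.card_fin, Fintype.card_coe]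
  push_cast
  rfl

theorem le_algebraMap (hloc : IsLocalOn S h H) {r : ℝ} (hle : h ≤ algebraMap ℝ _ r) :
    H ≤ algebraMap ℝ _ r := by
  rw [hloc.eq_submatrix_kronecker, ← submatrix_kronecker_one_algebraMap
    (Equiv.piEquivPiSubtypeProd (· ∈ S) _) r]
  exact submatrix_kronecker_one_mono _ hle

theorem norm_le_re_trace (hloc : IsLocalOn S h H) (hh : h.PosSemidef) :
    ‖H‖ ≤ h.trace.re :=
  (CStarAlgebra.norm_le_iff_le_algebraMap H hh.re_trace_nonneg (hloc.posSemidef hh).nonneg).2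
    (hloc.le_algebraMap hh.le_algebraMap_re_trace)

end IsLocalOn

end Matrix

/-- **Trace/norm bound for sums of local PSD terms dominated by the identity.**
If the `H_i` are `C_i`-local with PSD local parts `h_i`, `|C_i| ≤ q`, and
`∑ H_i ≼ I` on `n` qubits, then `∑ tr(h_i) ≤ 2^q`, and consequently
`∑ ‖H_i‖ ≤ 2^q` in the ℓ²→ℓ² operator norm. -/
theorem sum_local_trace_le_of_sum_le_one
    (n q m : ℕ) (hqn : q ≤ n)
    (C : Fin m → Finset (Fin n))
    (hCcard : ∀ i, (C i).card ≤ q)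
    (h : ∀ i : Fin m, Matrix ({j // j ∈ C i} → Fin 2) ({j // j ∈ C i} → Fin 2) ℂ)
    (hpsd : ∀ i, (h i).PosSemidef)
    (H : Fin m → Matrix (Fin n → Fin 2) (Fin n → Fin 2) ℂ)
    (hlocal : ∀ i, Matrix.IsLocalOn (C i) (h i) (H i))
    (hle : ((1 : Matrix (Fin n → Fin 2) (Fin n → Fin 2) ℂ) - ∑ i, H i).PosSemidef) :
    (∑ i, ((h i).trace).re ≤ (2 : ℝ) ^ q) ∧ (∑ i, ‖H i‖ ≤ (2 : ℝ) ^ q) := by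
  have hlocal_trace : ∀ i, (2 : ℝ) ^ (n - q) * (h i).trace.re ≤ (H i).trace.re := fun i => by
    rw [(hlocal i).trace_eq, ← Complex.ofReal_ofNat, ← Complex.ofReal_pow,
      Complex.re_mul_ofReal, mul_comm]
    exact mul_le_mul_of_nonneg_left
      (pow_le_pow_right₀ one_le_two (Nat.sub_le_sub_left (hCcard i) n)) (hpsd i).re_trace_nonneg
  have hsum_trace : ∑ i, (H i).trace.re ≤ 2 ^ n := by
    have := hle.re_trace_nonneg
    simp only [trace_sub, trace_sum, trace_one, RCLike.re_to_complex, Complex.sub_re,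
      Complex.re_sum, Complex.natCast_re, Fintype.card_fun, Fintype.card_fin] at this
    push_cast at this
    linarith
  have htrace : ∑ i, (h i).trace.re ≤ 2 ^ q := by
    refine le_of_mul_le_mul_left ?_ (pow_pos two_pos (n - q))
    rw [← pow_add, Nat.sub_add_cancel hqn, Finset.mul_sum]
    exact (Finset.sum_le_sum fun i _ => hlocal_trace i).trans hsum_trace
  exact ⟨htrace, (Finset.sum_le_sum fun i _ => (hlocal i).norm_le_re_trace (hpsd i)).trans htrace⟩
end

section
/- Let m ≥ 1 and let A₁, …, A_m be PSD complex matrices of the same size with Σ_{i=1}^{m} ‖A_i‖ ≤ 1/8. Then there exist matrices Q₁, …, Q_m such that: (i) each Q_i is a nonnegative combination of at most two of the original terms, i.e. Q_i = c_i · A_{j(i)} + d_i · A_{k(i)} for some indices j(i), k(i) ∈ Fin m and reals c_i, d_i ≥ 0 (hence each Q_i is PSD); (ii) ‖Q_i‖ ≤ 1/m for every i; and (iii) Σ_{i=1}^{m} Q_i = Σ_{i=1}^{m} A_i. -/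
open Matrix
open scoped Matrix.Norms.L2Operator ComplexOrder

/-!
Walker's alias method. Given `n` vectors of total norm at most `n t`, the one of least norm,
`v s`, has norm at most `t`. It goes into a bucket of its own, which is filled up to `t` with
a fraction of the vector `v L` of largest norm among the others (or with all of `v L`, if that
fits). The `n - 1` vectors left over then have total norm at most `(n - 1) t`, and we recurse.
-/

open Finset Function

-- `σ = ‖v s‖`, `ρ = ‖v L‖`, `X` is the total norm of the vectors other than `v s`;
-- the bucket gets `r • v L`.
lemma exists_fill_fraction {σ ρ X t n : ℝ} (hσ : 0 ≤ σ) (hσt : σ ≤ t) (hρ : 0 ≤ ρ) (hn : 0 ≤ n)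
    (hX : X ≤ n * ρ) (hsum : σ + X ≤ (n + 1) * t) :
    ∃ r : ℝ, 0 ≤ r ∧ r ≤ 1 ∧ σ + r * ρ ≤ t ∧ X - r * ρ ≤ n * t := by
  rcases le_or_gt (σ + ρ) t with hfit | hover
  · exact ⟨1, zero_le_one, le_rfl, by linarith, by nlinarith⟩
  · have hρpos : 0 < ρ := by linarith
    refine ⟨(t - σ) / ρ, div_nonneg (by linarith) hρ, (div_le_one hρpos).2 (by linarith), ?_, ?_⟩
    all_goals rw [div_mul_cancel₀ _ hρpos.ne']; linarith

section

variable {E ι : Type*} [SeminormedAddCommGroup E] [NormedSpace ℝ E]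

def twoTermCombinations (v : ι → E) : Set E :=
  {q | ∃ (p₁ p₂ : ι) (c d : ℝ), 0 ≤ c ∧ 0 ≤ d ∧ q = c • v p₁ + d • v p₂}

variable [DecidableEq ι]

lemma twoTermCombinations_update_smul_subset (v : ι → E) (L : ι) {r : ℝ} (hr : 0 ≤ r) :
    twoTermCombinations (update v L (r • v L)) ⊆ twoTermCombinations v := by
  have hscale : ∀ p, ∃ a : ℝ, 0 ≤ a ∧ update v L (r • v L) p = a • v p := by
    intro p
    rcases eq_or_ne p L with rfl | hp
    · exact ⟨r, hr, update_self ..⟩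
    · exact ⟨1, zero_le_one, by rw [update_of_ne hp, one_smul]⟩
  rintro _ ⟨p₁, p₂, c, d, hc, hd, rfl⟩
  obtain ⟨a₁, ha₁, h₁⟩ := hscale p₁
  obtain ⟨a₂, ha₂, h₂⟩ := hscale p₂
  exact ⟨p₁, p₂, c * a₁, d * a₂, by positivity, by positivity, by rw [h₁, h₂, smul_smul, smul_smul]⟩

lemma exists_bucket_and_remainder {n : ℕ} {S : Finset ι} {v : ι → E} {t : ℝ}
    (hS : #S = n + 1) (hsum : ∑ p ∈ S, ‖v p‖ ≤ (n + 1) * t) :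
    ∃ q ∈ twoTermCombinations v, ‖q‖ ≤ t ∧
      ∃ (S' : Finset ι) (v' : ι → E), #S' = n ∧ ∑ p ∈ S', ‖v' p‖ ≤ n * t ∧
        twoTermCombinations v' ⊆ twoTermCombinations v ∧ q + ∑ p ∈ S', v' p = ∑ p ∈ S, v p := by
  obtain ⟨s, hs, hsmin⟩ := S.exists_min_image (‖v ·‖) (card_pos.1 (by omega))
  have hT : #(S.erase s) = n := by rw [card_erase_of_mem hs, hS, Nat.add_sub_cancel]
  have hsplit : ∑ p ∈ S, ‖v p‖ = ‖v s‖ + ∑ p ∈ S.erase s, ‖v p‖ := (add_sum_erase S _ hs).symm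
  have hst : ‖v s‖ ≤ t := by
    have := S.card_nsmul_le_sum _ _ hsmin
    rw [hS, nsmul_eq_mul] at this
    push_cast at this
    exact le_of_mul_le_mul_left (this.trans hsum) (by positivity)
  rcases (S.erase s).eq_empty_or_nonempty with hempty | hne
  · refine ⟨v s, ⟨s, s, 1, 0, zero_le_one, le_rfl, by simp⟩, hst, ∅, v, ?_, ?_, subset_rfl, ?_⟩
    · rw [← hT, hempty]
    · rw [← hT, hempty]; simp
    · rw [← add_sum_erase S v hs, hempty]
  obtain ⟨L, hL, hLmax⟩ := (S.erase s).exists_max_image (‖v ·‖) hne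
  have hX : ∑ p ∈ S.erase s, ‖v p‖ ≤ n * ‖v L‖ := by
    simpa [hT] using (S.erase s).sum_le_card_nsmul _ _ hLmax
  obtain ⟨r, hr0, hr1, hbucket, hrest⟩ :=
    exists_fill_fraction (norm_nonneg _) hst (norm_nonneg _) n.cast_nonneg hX (hsplit ▸ hsum)
  have hnorms : ∀ w : E, (fun p ↦ ‖update v L w p‖) = update (‖v ·‖) L ‖w‖ := fun w ↦
    funext (apply_update (fun _ x ↦ ‖x‖) v L w)
  refine ⟨v s + r • v L, ⟨s, L, 1, r, zero_le_one, hr0, by rw [one_smul]⟩, ?_,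
    S.erase s, update v L ((1 - r) • v L), hT, ?_,
    twoTermCombinations_update_smul_subset v L (by linarith), ?_⟩
  · calc ‖v s + r • v L‖ ≤ ‖v s‖ + r * ‖v L‖ := by
          simpa [norm_smul, abs_of_nonneg hr0] using norm_add_le (v s) (r • v L)
      _ ≤ t := hbucket
  · rw [hnorms, sum_update_of_mem hL, norm_smul, Real.norm_of_nonneg (by linarith),
      sdiff_singleton_eq_erase]
    rw [← add_sum_erase _ _ hL] at hrest
    linarith
  · rw [sum_update_of_mem hL, sdiff_singleton_eq_erase, ← add_sum_erase S v hs,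
      ← add_sum_erase _ v hL, sub_smul, one_smul]
    abel

theorem exists_twoTermCombinations_sum_eq (t : ℝ) (n : ℕ) (S : Finset ι) (v : ι → E)
    (hS : #S = n) (hsum : ∑ p ∈ S, ‖v p‖ ≤ n * t) :
    ∃ Q : Fin n → E, (∀ i, Q i ∈ twoTermCombinations v) ∧ (∀ i, ‖Q i‖ ≤ t) ∧
      ∑ i, Q i = ∑ p ∈ S, v p := by
  induction n generalizing S v with
  | zero => exact ⟨Fin.elim0, Fin.rec0, Fin.rec0, by simp [card_eq_zero.1 hS]⟩
  | succ n ih =>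
    push_cast at hsum
    obtain ⟨q, hq, hqt, S', v', hS', hsum', hsub, hqsum⟩ := exists_bucket_and_remainder hS hsum
    obtain ⟨Q, hQ, hQt, hQsum⟩ := ih S' v' hS' hsum'
    refine ⟨Fin.cons q Q, Fin.cases hq fun i ↦ hsub (hQ i), Fin.cases hqt hQt, ?_⟩
    rw [Fin.sum_cons, hQsum, hqsum]

end

theorem psd_redistribution_general
    (N m : ℕ) (hm : 1 ≤ m)
    (A : Fin m → Matrix (Fin N) (Fin N) ℂ)
    (hsum : ∑ i, ‖A i‖ ≤ 1 / 8) :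
    ∃ (Q : Fin m → Matrix (Fin N) (Fin N) ℂ)
      (j k : Fin m → Fin m) (c d : Fin m → ℝ),
      (∀ i, 0 ≤ c i) ∧ (∀ i, 0 ≤ d i) ∧
      (∀ i, Q i = c i • A (j i) + d i • A (k i)) ∧
      (∀ i, ‖Q i‖ ≤ 1 / m) ∧
      (∑ i, Q i = ∑ i, A i) := by
  have hsum' : ∑ i, ‖A i‖ ≤ m * (1 / m : ℝ) := by
    rw [mul_one_div_cancel (Nat.cast_ne_zero.2 (by omega))]
    linarith
  obtain ⟨Q, hQ, hQnorm, hQsum⟩ :=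
    exists_twoTermCombinations_sum_eq (1 / m) m univ A (card_fin m) hsum'
  choose j k c d hc hd hQeq using hQ
  exact ⟨Q, j, k, c, d, hc, hd, hQeq, hQnorm, hQsum⟩

/-- **Redistribution of PSD terms (core of the Hamiltonian local smoothing lemma).**
If `A₁, …, A_m` are PSD with `∑ ‖A_i‖ ≤ 1/8`, then there are terms `Q_i`, each a
nonnegative combination of at most two of the `A`'s, with `‖Q_i‖ ≤ 1/m` and
`∑ Q_i = ∑ A_i`. -/
theorem psd_redistribution
    (N m : ℕ) (hm : 1 ≤ m)
    (A : Fin m → Matrix (Fin N) (Fin N) ℂ)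
    (hpsd : ∀ i, (A i).PosSemidef)
    (hsum : ∑ i, ‖A i‖ ≤ 1 / 8) :
    ∃ (Q : Fin m → Matrix (Fin N) (Fin N) ℂ)
      (j k : Fin m → Fin m) (c d : Fin m → ℝ),
      (∀ i, 0 ≤ c i) ∧ (∀ i, 0 ≤ d i) ∧
      (∀ i, Q i = c i • A (j i) + d i • A (k i)) ∧
      (∀ i, ‖Q i‖ ≤ 1 / m) ∧
      (∑ i, Q i = ∑ i, A i) :=
  psd_redistribution_general N m hm A hsum
end

section
/- Let m ≥ 1 be a natural number and 0 < ε ≤ 1. Let p : Fin m → ℝ satisfy 0 ≤ p_i ≤ 1 for all i and Σ_i p_i = 1, and let H_i be complex matrices of a common size with ‖H_i‖ ≤ 1 for all i. Let p̃ : Fin m → ℝ satisfy p̃_i ≥ 0 and |p̃_i − p_i| ≤ ε/(8m²) for all i, and let H̃_i be PSD matrices with ‖H_i − H̃_i‖ ≤ ε/6 for all i. Set W̃ = Σ_i p̃_i, p̂_i = p̃_i / W̃, and Ĥ_i = H̃_i / max(‖H̃_i‖, 1). Then ‖Σ_{i ∈ Fin m} p̂_i • Ĥ_i − Σ_{i ∈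 Fin m} p_i • H_i‖ ≤ ε. -/
/-!
The error splits termwise as `(p̂ᵢ - pᵢ) • Ĥᵢ + pᵢ • (Ĥᵢ - Hᵢ)`. Radial rescaling onto the
unit ball moves `H̃ᵢ` by at most its distance to any point of the ball, in particular to `Hᵢ`,
so `‖Ĥᵢ - Hᵢ‖ ≤ 2 ‖H̃ᵢ - Hᵢ‖ ≤ ε / 3`. Renormalizing nonnegative weights at most doubles
their `ℓ¹` distance to a probability vector, so `∑ |p̂ᵢ - pᵢ| ≤ 2m · ε / (8m²) ≤ ε / 4`.
-/

open Matrix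
open scoped Matrix.Norms.L2Operator ComplexOrder
open Finset

section UnitBallRetract

variable {E : Type*} [SeminormedAddCommGroup E] [NormedSpace ℝ E]

noncomputable def unitBallRetract (y : E) : E := (max ‖y‖ 1)⁻¹ • y

theorem norm_unitBallRetract_le (y : E) : ‖unitBallRetract y‖ ≤ 1 := by
  rw [unitBallRetract, norm_smul, Real.norm_of_nonneg (by positivity)]
  exact inv_mul_le_one_of_le₀ (le_max_left _ _) (by positivity)

theorem norm_unitBallRetract_sub_self_le {x : E} (hx : ‖x‖ ≤ 1) (y : E) :
    ‖unitBallRetract y - y‖ ≤ ‖x - y‖ := by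
  rcases le_total ‖y‖ 1 with hy | hy
  · simp [unitBallRetract, max_eq_right hy]
  · calc ‖unitBallRetract y - y‖ = ‖(‖y‖⁻¹ - 1) • y‖ := by
          rw [unitBallRetract, max_eq_left hy, sub_smul, one_smul]
      _ = ‖y‖ - 1 := by
          rw [norm_smul, Real.norm_eq_abs, abs_sub_comm,
            abs_of_nonneg (sub_nonneg.2 (inv_le_one_of_one_le₀ hy))]
          field_simp
      _ ≤ ‖y‖ - ‖x‖ := by linarith
      _ ≤ ‖x - y‖ := norm_sub_rev y x ▸ norm_sub_norm_le y x

theorem norm_unitBallRetract_sub_le {x : E} (hx : ‖x‖ ≤ 1) (y : E) :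
    ‖unitBallRetract y - x‖ ≤ 2 * ‖x - y‖ :=
  calc ‖unitBallRetract y - x‖ ≤ ‖unitBallRetract y - y‖ + ‖y - x‖ :=
        norm_sub_le_norm_sub_add_norm_sub _ _ _
    _ ≤ 2 * ‖x - y‖ := by linarith [norm_unitBallRetract_sub_self_le hx y, norm_sub_rev y x]

end UnitBallRetract

section Weights

variable {ι : Type*} [Fintype ι]

theorem sum_abs_div_sum_sub_le {p q : ι → ℝ} (hq : ∀ i, 0 ≤ q i) (hp : ∑ i, p i = 1) :
    ∑ i, |q i / ∑ j, q j - p i| ≤ 2 * ∑ i, |q i - p i| := by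
  set W := ∑ j, q j
  have hW : 0 ≤ W := sum_nonneg fun i _ => hq i
  -- This also holds for `W = 0`, where `W⁻¹ = 0`.
  have hscale : W * |W⁻¹ - 1| ≤ |1 - W| := by
    rcases hW.eq_or_lt with hW0 | hW0
    · simp [← hW0]
    · nth_rewrite 1 [← abs_of_pos hW0]
      rw [← abs_mul, mul_sub, mul_inv_cancel₀ hW0.ne', mul_one]
  have hmass : |1 - W| ≤ ∑ i, |q i - p i| := by
    rw [← hp, ← sum_sub_distrib]
    exact (abs_sum_le_sum_abs _ _).trans_eq (sum_congr rfl fun i _ => abs_sub_comm _ _)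
  calc ∑ i, |q i / W - p i| ≤ ∑ i, (q i * |W⁻¹ - 1| + |q i - p i|) := by
        refine sum_le_sum fun i _ => ?_
        rw [show q i / W - p i = q i * (W⁻¹ - 1) + (q i - p i) by ring]
        exact (abs_add_le _ _).trans_eq (by rw [abs_mul, abs_of_nonneg (hq i)])
    _ = W * |W⁻¹ - 1| + ∑ i, |q i - p i| := by rw [sum_add_distrib, ← sum_mul]
    _ ≤ 2 * ∑ i, |q i - p i| := by linarith

variable {E : Type*} [SeminormedAddCommGroup E] [NormedSpace ℝ E]

theorem norm_sum_smul_sub_sum_smul_le {p q : ι → ℝ} {x y : ι → E} {η : ℝ}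
    (hp : ∀ i, 0 ≤ p i) (hpsum : ∑ i, p i = 1) (hy : ∀ i, ‖y i‖ ≤ 1)
    (hxy : ∀ i, ‖y i - x i‖ ≤ η) :
    ‖∑ i, q i • y i - ∑ i, p i • x i‖ ≤ ∑ i, |q i - p i| + η := by
  have hsplit : ∑ i, q i • y i - ∑ i, p i • x i =
      ∑ i, ((q i - p i) • y i + p i • (y i - x i)) := by
    simp only [sub_smul, smul_sub, sum_add_distrib, sum_sub_distrib]
    abel
  calc ‖∑ i, q i • y i - ∑ i, p i • x i‖ ≤ ∑ i, (|q i - p i| + p i * η) := by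
        rw [hsplit]
        refine norm_sum_le_of_le _ fun i _ => (norm_add_le _ _).trans (add_le_add ?_ ?_)
        · rw [norm_smul, Real.norm_eq_abs]
          exact mul_le_of_le_one_right (abs_nonneg _) (hy i)
        · rw [norm_smul, Real.norm_of_nonneg (hp i)]
          exact mul_le_mul_of_nonneg_left (hxy i) (hp i)
    _ = ∑ i, |q i - p i| + η := by rw [sum_add_distrib, ← sum_mul, hpsum, one_mul]

end Weights

theorem weighted_hamiltonian_perturbation_general
    (N m : ℕ) (hm : 1 ≤ m) (ε : ℝ) (hε0 : 0 < ε)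
    (p ptil : Fin m → ℝ)
    (H Htil : Fin m → Matrix (Fin N) (Fin N) ℂ)
    (hp0 : ∀ i, 0 ≤ p i) (hpsum : ∑ i, p i = 1)
    (hHnorm : ∀ i, ‖H i‖ ≤ 1)
    (hptil0 : ∀ i, 0 ≤ ptil i)
    (hptilerr : ∀ i, |ptil i - p i| ≤ ε / (8 * (m : ℝ) ^ 2))
    (hHtilerr : ∀ i, ‖H i - Htil i‖ ≤ ε / 6) :
    ‖(∑ i, (ptil i / ∑ j, ptil j) • (max ‖Htil i‖ 1)⁻¹ • Htil i) -
        ∑ i, p i • H i‖ ≤ ε := by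
  have hm' : (1 : ℝ) ≤ m := by exact_mod_cast hm
  have hweights : ∑ i, |ptil i / ∑ j, ptil j - p i| ≤ ε / 4 :=
    calc _ ≤ 2 * ∑ i, |ptil i - p i| := sum_abs_div_sum_sub_le hptil0 hpsum
      _ ≤ 2 * (m * (ε / (8 * m ^ 2))) := by
          gcongr
          simpa using sum_le_sum fun i (_ : i ∈ univ) => hptilerr i
      _ = ε / 4 / m := by field_simp; ring
      _ ≤ ε / 4 := div_le_self (by positivity) hm'
  have hterms : ∀ i, ‖unitBallRetract (Htil i) - H i‖ ≤ ε / 3 := fun i => by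
    linarith [norm_unitBallRetract_sub_le (hHnorm i) (Htil i), hHtilerr i]
  calc _ ≤ ∑ i, |ptil i / ∑ j, ptil j - p i| + ε / 3 :=
        norm_sum_smul_sub_sum_smul_le hp0 hpsum (fun i => norm_unitBallRetract_le _) hterms
    _ ≤ ε := by linarith

/-- **Perturbation bound for learning weighted Hamiltonians.**
If each weight `p̃_i` is within `ε/(8m²)` of the true probability weight `p_i`, and each
PSD term `H̃_i` is within `ε/6` of `H_i` (with `‖H_i‖ ≤ 1`), then after renormalizing the
weights (`p̂_i = p̃_i / ∑ p̃_j`) and rescaling each term (`Ĥ_i = H̃_i / max(‖H̃_i‖, 1)`),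
the resulting Hamiltonian differs from `∑ p_i H_i` by at most `ε` in operator norm. -/
theorem weighted_hamiltonian_perturbation
    (N m : ℕ) (hm : 1 ≤ m) (ε : ℝ) (hε0 : 0 < ε) (hε1 : ε ≤ 1)
    (p ptil : Fin m → ℝ)
    (H Htil : Fin m → Matrix (Fin N) (Fin N) ℂ)
    (hp0 : ∀ i, 0 ≤ p i) (hp1 : ∀ i, p i ≤ 1) (hpsum : ∑ i, p i = 1)
    (hHnorm : ∀ i, ‖H i‖ ≤ 1)
    (hptil0 : ∀ i, 0 ≤ ptil i)
    (hptilerr : ∀ i, |ptil i - p i| ≤ ε / (8 * (m : ℝ) ^ 2))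
    (hHtilpsd : ∀ i, (Htil i).PosSemidef)
    (hHtilerr : ∀ i, ‖H i - Htil i‖ ≤ ε / 6) :
    ‖(∑ i, (ptil i / ∑ j, ptil j) • (max ‖Htil i‖ 1)⁻¹ • Htil i) -
        ∑ i, p i • H i‖ ≤ ε :=
  weighted_hamiltonian_perturbation_general N m hm ε hε0 p ptil H Htil hp0 hpsum hHnorm hptil0
    hptilerr hHtilerr
end

section
/- Let d be a natural number and let M be a d×d complex Hermitian matrix with 0 ≼ M ≼ I. Then there exists a complex matrix T with rows indexed by (Fin d × Fin 2) and columns indexed by Fin d such that Tᴴ · T = I (T is an isometry) and Tᴴ · (I_d ⊗ₖ P₁) · T = I − M, where P₁ is the 2×2 matrix diag(0,1). Consequently, for every vector ψ ∈ ℂ^{d}, the squared norm ‖(I_d ⊗ₖ P₁) · T · ψ‖² equals ψᴴ(I − M)ψ; in particular, for a unit vector ψ this probability equals 1 − ψᴴMψ. -/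
/-!
Write `M = Aᴴ A` and `1 - M = Bᴴ B`, as both are positive semidefinite, and take
`T ψ = A ψ ⊗ |0⟩ + B ψ ⊗ |1⟩`. Then `Tᴴ T = Aᴴ A + Bᴴ B = 1`, and since `1 ⊗ P₁` kills the
`|0⟩` branch, `(1 ⊗ P₁) T = B ⊗ |1⟩`, so that `Tᴴ (1 ⊗ P₁) T` and the squared norm of
`(1 ⊗ P₁) T ψ` are both given by `Bᴴ B = 1 - M`.
-/

open Matrix
open scoped Kronecker ComplexOrder

namespace Matrix

variable {m n ι α : Type*}

/-- The matrix of `ψ ↦ ∑ k, A k ψ ⊗ |k⟩`. -/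
def stack (A : ι → Matrix m n α) : Matrix (m × ι) n α :=
  of fun p j => A p.2 p.1 j

@[simp]
lemma stack_apply (A : ι → Matrix m n α) (i : m) (k : ι) (j : n) :
    stack A (i, k) j = A k i j :=
  rfl

lemma conjTranspose_stack_mul_stack [Fintype m] [Fintype ι] [NonUnitalSemiring α] [StarRing α]
    {p : Type*} (A : ι → Matrix m n α) (B : ι → Matrix m p α) :
    (stack A)ᴴ * stack B = ∑ k, (A k)ᴴ * B k := by
  ext i j
  simp only [mul_apply, conjTranspose_apply, stack_apply, sum_apply,
    Fintype.sum_prod_type_right]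

lemma one_kronecker_diagonal_mul_stack [Fintype m] [Fintype ι] [DecidableEq m] [DecidableEq ι]
    [NonAssocSemiring α] (c : ι → α) (A : ι → Matrix m n α) :
    ((1 : Matrix m m α) ⊗ₖ diagonal c) * stack A = stack fun k => c k • A k := by
  ext ⟨i, k⟩ j
  simp [mul_apply, one_apply, diagonal_apply, Fintype.sum_prod_type]

lemma star_mulVec_dotProduct_mulVec [Fintype m] [Fintype n] [CommSemiring α] [StarRing α]
    (N : Matrix m n α) (ψ : n → α) :
    star (N *ᵥ ψ) ⬝ᵥ (N *ᵥ ψ) = star ψ ⬝ᵥ ((Nᴴ * N) *ᵥ ψ) := by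
  rw [star_mulVec, dotProduct_mulVec, vecMul_vecMul, ← dotProduct_mulVec]

open scoped MatrixOrder in
lemma PosSemidef.exists_eq_conjTranspose_mul_self [Fintype n] {𝕜 : Type*}
    [RCLike 𝕜] {M : Matrix n n 𝕜} (hM : M.PosSemidef) : ∃ A : Matrix n n 𝕜, Aᴴ * A = M := by
  classical
  obtain ⟨A, hA⟩ := CStarAlgebra.nonneg_iff_eq_star_mul_self.mp hM.nonneg
  exact ⟨A, hA.symm⟩

end Matrix

/-- **Core of Kitaev's energy estimation protocol.**
For Hermitian `M` with `0 ≼ M ≼ I`, there is an isometry `T : ℂ^d → ℂ^d ⊗ ℂ²`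
(`Tᴴ T = I`) such that `Tᴴ (I ⊗ P₁) T = I − M`, where `P₁ = diag(0,1)`.
Consequently, for every `ψ`, the squared norm of `(I ⊗ P₁) T ψ` equals
`ψᴴ (I − M) ψ`; for unit `ψ` this is `1 − ψᴴ M ψ`. -/
theorem kitaev_energy_measurement
    (d : ℕ) (M : Matrix (Fin d) (Fin d) ℂ)
    (hM : M.PosSemidef)
    (hM1 : ((1 : Matrix (Fin d) (Fin d) ℂ) - M).PosSemidef)
    (P₁ : Matrix (Fin 2) (Fin 2) ℂ) (hP₁ : P₁ = Matrix.diagonal ![0, 1]) :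
    ∃ T : Matrix (Fin d × Fin 2) (Fin d) ℂ,
      Tᴴ * T = 1 ∧
      Tᴴ * ((1 : Matrix (Fin d) (Fin d) ℂ) ⊗ₖ P₁) * T = 1 - M ∧
      ∀ ψ : Fin d → ℂ,
        star ((((1 : Matrix (Fin d) (Fin d) ℂ) ⊗ₖ P₁) * T) *ᵥ ψ) ⬝ᵥ
            ((((1 : Matrix (Fin d) (Fin d) ℂ) ⊗ₖ P₁) * T) *ᵥ ψ) =
          star ψ ⬝ᵥ (((1 : Matrix (Fin d) (Fin d) ℂ) - M) *ᵥ ψ) := by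
  obtain ⟨A, hA⟩ := hM.exists_eq_conjTranspose_mul_self
  obtain ⟨B, hB⟩ := hM1.exists_eq_conjTranspose_mul_self
  have hproj : ((1 : Matrix (Fin d) (Fin d) ℂ) ⊗ₖ P₁) * stack ![A, B] = stack ![0, B] := by
    rw [hP₁, one_kronecker_diagonal_mul_stack]
    congr 1
    ext k : 1
    fin_cases k <;> simp
  refine ⟨stack ![A, B], ?_, ?_, fun ψ => ?_⟩
  · simp [conjTranspose_stack_mul_stack, hA, hB]
  · simp [Matrix.mul_assoc, hproj, conjTranspose_stack_mul_stack, hB]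
  · rw [hproj, star_mulVec_dotProduct_mulVec, conjTranspose_stack_mul_stack]
    simp [hB]
end

section
/- Let d ≥ 1 be a natural number and 0 < ε < 1, and set h = √(1 − ε²). Suppose P is a finite set of unit vectors in ℂ^{d·d} (indexed by Fin d × Fin d) such that for every unit vector φ ∈ ℂ^{d·d} there exists ψ ∈ P with |ψᴴφ| ≥ h (P is an h-net for pure states on the doubled space). Define D = { tr_B(ψψᴴ) : ψ ∈ P }, where tr_B is the partial trace over the second factor: (tr_B M)_{i,i'} = Σ_{j ∈ Fin d} M_{(i,j),(i',j)}. Then for every PSD d×d complex matrix σ with trace(σ) = 1, there exists ρ ∈ D with (1/2)·‖ρ − σ‖₁ ≤ ε; moreover |D| ≤ |P|. In other words, partial-tracing an h-net of purifications yields an ε-covering set of density matrices in trace distance, of no larger cardinality. -/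
open Matrix
open scoped ComplexOrder Classical

/-- The trace norm `‖A‖₁ = tr √(Aᴴ A)` of a complex matrix. -/
noncomputable def Matrix.traceNorm {n : Type*} [Fintype n] [DecidableEq n]
    (A : Matrix n n ℂ) : ℝ :=
  ((Matrix.posSemidef_conjTranspose_mul_self A).1.eigenvectorUnitary.1 *
      Matrix.diagonal (fun i => ((Real.sqrt
        ((Matrix.posSemidef_conjTranspose_mul_self A).1.eigenvalues i) : ℝ) : ℂ)) *
      (star (Matrix.posSemidef_conjTranspose_mul_self A).1.eigenvectorUnitary.1)).trace.re

/-- The partial trace over the second tensor factor: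
`(tr_B M)_{i,i'} = ∑ⱼ M_{(i,j),(i',j)}`. -/
noncomputable def ptraceB {d : ℕ} (M : Matrix (Fin d × Fin d) (Fin d × Fin d) ℂ) :
    Matrix (Fin d) (Fin d) ℂ :=
  Matrix.of fun i i' => ∑ j : Fin d, M (i, j) (i', j)

/-!
Purify `σ = Bᴴ B` by the unit vector `φ (i, j) = Bᴴ i j`, so that `tr_B (φ φᴴ) = σ`, and take
`ρ = tr_B (ψ ψᴴ)` for the `ψ ∈ P` with `|ψᴴ φ| ≥ h`. The difference `A = ψ ψᴴ - φ φᴴ` of two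
rank-one projections satisfies `A³ = t² A` with `t = √(1 - |ψᴴ φ|²) ≤ ε`, so its spectrum lies in `{0, ±t}`
and `A = X - Y` with `X, Y ⪰ 0` and `tr X + tr Y = tr A² / t = 2 t`. The partial trace preserves
positivity and trace, hence `‖ρ - σ‖₁ = ‖tr_B X - tr_B Y‖₁ ≤ tr X + tr Y = 2 t ≤ 2 ε`.
-/

theorem IsIdempotentElem.sub_mul_sub_mul_sub {S R : Type*} [CommRing S] [Ring R] [Algebra S R]
    {p q : R} (hp : IsIdempotentElem p) (hq : IsIdempotentElem q) {c : S}
    (hpqp : p * q * p = c • p) (hqpq : q * p * q = c • q) :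
    (p - q) * (p - q) * (p - q) = (1 - c) • (p - q) := by
  have expand : (p - q) * (p - q) * (p - q) =
      p * p * p - p * p * q - p * q * p + p * q * q - q * p * p + q * p * q + q * q * p
        - q * q * q := by noncomm_ring
  rw [expand, hpqp, hqpq, hp.eq, hq.eq, mul_assoc p q q, hq.eq, mul_assoc q p p, hp.eq]
  simp only [sub_smul, one_smul, smul_sub]
  abel

namespace Matrix

variable {𝕜 n : Type*} [RCLike 𝕜] [Fintype n]

lemma isIdempotentElem_vecMulVec_star {ψ : n → 𝕜} (hψ : star ψ ⬝ᵥ ψ = 1) :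
    IsIdempotentElem (vecMulVec ψ (star ψ)) := by
  rw [IsIdempotentElem, vecMulVec_mul_vecMulVec, hψ, one_smul]

lemma vecMulVec_star_mul_vecMulVec_star (ψ φ : n → 𝕜) :
    vecMulVec ψ (star ψ) * vecMulVec φ (star φ) = (star ψ ⬝ᵥ φ) • vecMulVec ψ (star φ) := by
  rw [vecMulVec_mul_vecMulVec, vecMulVec_smul]

lemma trace_vecMulVec_star_mul_vecMulVec_star (ψ φ : n → 𝕜) :
    (vecMulVec ψ (star ψ) * vecMulVec φ (star φ)).trace = (‖star ψ ⬝ᵥ φ‖ ^ 2 : ℝ) := by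
  rw [vecMulVec_star_mul_vecMulVec_star, trace_smul, trace_vecMulVec, dotProduct_comm ψ,
    star_dotProduct φ, smul_eq_mul, RCLike.star_def, RCLike.mul_conj]
  norm_cast

lemma vecMulVec_star_mul_vecMulVec_star_mul_self (ψ φ : n → 𝕜) :
    vecMulVec ψ (star ψ) * vecMulVec φ (star φ) * vecMulVec ψ (star ψ) =
      (‖star ψ ⬝ᵥ φ‖ ^ 2 : ℝ) • vecMulVec ψ (star ψ) := by
  rw [vecMulVec_star_mul_vecMulVec_star, smul_mul_assoc, vecMulVec_mul_vecMulVec, vecMulVec_smul,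
    smul_smul, star_dotProduct φ, RCLike.star_def, RCLike.mul_conj, ← RCLike.ofReal_pow,
    RCLike.real_smul_eq_coe_smul (K := 𝕜)]

lemma IsHermitian.eq_zero_of_mul_mul_self_eq_zero {A : Matrix n n 𝕜} (hA : A.IsHermitian)
    (h : A * A * A = 0) : A = 0 := by
  have hA2 : A * A = 0 := by
    rw [← conjTranspose_mul_self_eq_zero, conjTranspose_mul, hA.eq, ← mul_assoc, h, zero_mul]
  rwa [← conjTranspose_mul_self_eq_zero, hA.eq]

lemma IsHermitian.posSemidef_of_mul_self_eq_smul {Z : Matrix n n 𝕜} (hZ : Z.IsHermitian) {k : ℝ}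
    (hk : 0 < k) (h : Z * Z = k • Z) : Z.PosSemidef := by
  have hZ' : Z = k⁻¹ • (Zᴴ * Z) := by rw [hZ.eq, h, smul_smul, inv_mul_cancel₀ hk.ne', one_smul]
  rw [hZ']
  exact (posSemidef_conjTranspose_mul_self Z).smul (inv_nonneg.mpr hk.le)

lemma IsHermitian.exists_posSemidef_sub_of_mul_mul_self_eq_smul {A : Matrix n n 𝕜}
    (hA : A.IsHermitian) {t : ℝ} (ht : 0 ≤ t) (h : A * A * A = t ^ 2 • A) :
    ∃ X Y : Matrix n n 𝕜, X.PosSemidef ∧ Y.PosSemidef ∧ A = X - Y ∧ X + Y = t⁻¹ • (A * A) := by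
  rcases ht.eq_or_lt with rfl | ht
  · have hA0 : A = 0 := hA.eq_zero_of_mul_mul_self_eq_zero (by simpa using h)
    exact ⟨0, 0, .zero, .zero, by simp [hA0], by simp⟩
  -- `t⁻¹ • A²` is `|A|`, as the spectrum of `A` lies in `{0, ±t}`; `X` and `Y` are `(|A| ± A) / 2`.
  have hpart : ∀ s : ℝ, s ^ 2 = t ^ 2 → (A * A + s • A).PosSemidef := by
    intro s hs
    have hherm : (A * A + s • A).IsHermitian :=
      ((hA.eq ▸ isHermitian_conjTranspose_mul_self A)).add (hA.smul (IsSelfAdjoint.all s))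
    refine hherm.posSemidef_of_mul_self_eq_smul (k := 2 * t ^ 2) (by positivity) ?_
    simp only [add_mul, mul_add, smul_mul_assoc, mul_smul_comm, smul_smul, ← mul_assoc, h]
    rw [smul_add, smul_smul, smul_smul, ← sq s, hs]
    module
  refine ⟨(2 * t)⁻¹ • (A * A + t • A), (2 * t)⁻¹ • (A * A + (-t) • A),
    (hpart t rfl).smul (by positivity), (hpart (-t) (by ring)).smul (by positivity), ?_, ?_⟩
  · match_scalars <;> field_simp <;> ring
  · match_scalars <;> field_simp <;> ring

lemma exists_posSemidef_sub_eq_vecMulVec_sub {ψ φ : n → 𝕜} (hψ : star ψ ⬝ᵥ ψ = 1)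
    (hφ : star φ ⬝ᵥ φ = 1) :
    ∃ X Y : Matrix n n 𝕜, X.PosSemidef ∧ Y.PosSemidef ∧
      vecMulVec ψ (star ψ) - vecMulVec φ (star φ) = X - Y ∧
      (X + Y).trace = (2 * √(1 - ‖star ψ ⬝ᵥ φ‖ ^ 2) : ℝ) := by
  set p := vecMulVec ψ (star ψ)
  set q := vecMulVec φ (star φ)
  set r := ‖star ψ ⬝ᵥ φ‖
  have hp := isIdempotentElem_vecMulVec_star hψ
  have hq := isIdempotentElem_vecMulVec_star hφ
  have hpqp : p * q * p = r ^ 2 • p := vecMulVec_star_mul_vecMulVec_star_mul_self ψ φ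
  have hqpq : q * p * q = r ^ 2 • q := by
    rw [vecMulVec_star_mul_vecMulVec_star_mul_self φ ψ, star_dotProduct φ, norm_star]
  have hherm : (p - q).IsHermitian :=
    (posSemidef_vecMulVec_self_star ψ).1.sub (posSemidef_vecMulVec_self_star φ).1
  have htr : ((p - q) * (p - q)).trace = (2 * (1 - r ^ 2) : ℝ) := by
    have htrp : ∀ v : n → 𝕜, star v ⬝ᵥ v = 1 → (vecMulVec v (star v)).trace = 1 := fun v hv => by
      rw [trace_vecMulVec, dotProduct_comm, hv]
    rw [sub_mul, mul_sub, mul_sub, hp.eq, hq.eq, trace_sub, trace_sub, trace_sub,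
      trace_mul_comm q p, trace_vecMulVec_star_mul_vecMulVec_star, htrp ψ hψ, htrp φ hφ]
    push_cast
    ring
  -- Cauchy–Schwarz `r ≤ 1` comes for free from `tr ((p - q)ᴴ (p - q)) ≥ 0`.
  have hr : r ^ 2 ≤ 1 := by
    have := (hherm.eq ▸ posSemidef_conjTranspose_mul_self (p - q)).trace_nonneg
    rw [htr, RCLike.ofReal_nonneg] at this
    linarith
  have ht : √(1 - r ^ 2) ^ 2 = 1 - r ^ 2 := Real.sq_sqrt (by linarith)
  obtain ⟨X, Y, hX, hY, hXY, hsum⟩ := hherm.exists_posSemidef_sub_of_mul_mul_self_eq_smul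
    (Real.sqrt_nonneg _) (by rw [ht]; exact hp.sub_mul_sub_mul_sub hq hpqp hqpq)
  refine ⟨X, Y, hX, hY, hXY, ?_⟩
  rw [hsum, trace_smul, htr, RCLike.real_smul_eq_coe_mul, ← RCLike.ofReal_mul]
  congr 1
  linear_combination 2 * inv_mul_mul_self √(1 - r ^ 2) - 2 * (√(1 - r ^ 2))⁻¹ * ht

section TraceNorm

variable [DecidableEq n]

lemma IsHermitian.trace_cfc {A : Matrix n n 𝕜} (hA : A.IsHermitian)
    (f : ℝ → ℝ) : (hA.cfc f).trace = ∑ i, (f (hA.eigenvalues i) : 𝕜) := by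
  rw [IsHermitian.cfc, Unitary.conjStarAlgAut_apply, trace_mul_cycle, Unitary.coe_star_mul_self,
    one_mul, trace_diagonal]
  rfl

lemma trace_eq_sum_star_dotProduct_mulVec {ι : Type*} [Fintype ι]
    (b : OrthonormalBasis ι 𝕜 (EuclideanSpace 𝕜 n)) (A : Matrix n n 𝕜) :
    A.trace = ∑ i, star ⇑(b i) ⬝ᵥ A *ᵥ ⇑(b i) := by
  have htr : (toEuclideanLin A).trace 𝕜 _ = A.trace := by
    rw [toEuclideanLin_eq_toLin_orthonormal,
      LinearMap.trace_eq_matrix_trace 𝕜 (EuclideanSpace.basisFun n 𝕜).toBasis,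
      LinearMap.toMatrix_toLin]
  rw [← htr, LinearMap.trace_eq_sum_inner _ b]
  simp [EuclideanSpace.inner_eq_star_dotProduct, dotProduct_comm]

open scoped MatrixOrder in
lemma IsHermitian.traceNorm_eq_sum_abs_eigenvalues {B : Matrix n n ℂ} (hB : B.IsHermitian) :
    B.traceNorm = ∑ i, |hB.eigenvalues i| := by
  have hBB := posSemidef_conjTranspose_mul_self B
  have habs : hBB.1.cfc Real.sqrt = hB.cfc (‖·‖) := by
    rw [← hBB.1.cfc_eq, ← hB.cfc_eq, ← CFC.abs_eq_cfc_norm B hB.isSelfAdjoint, CFC.abs,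
      CFC.sqrt_eq_real_sqrt (star B * B) hBB.nonneg, cfcₙ_eq_cfc]
    rfl
  have : B.traceNorm = (hBB.1.cfc Real.sqrt).trace.re := rfl
  rw [this, habs, hB.trace_cfc]
  simp [Complex.re_sum]

lemma traceNorm_sub_le {X Y : Matrix n n ℂ} (hX : X.PosSemidef) (hY : Y.PosSemidef) :
    (X - Y).traceNorm ≤ X.trace.re + Y.trace.re := by
  have hB := hX.1.sub hY.1
  set u := hB.eigenvectorBasis
  rw [hB.traceNorm_eq_sum_abs_eigenvalues, trace_eq_sum_star_dotProduct_mulVec u X,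
    trace_eq_sum_star_dotProduct_mulVec u Y, Complex.re_sum, Complex.re_sum,
    ← Finset.sum_add_distrib]
  refine Finset.sum_le_sum fun i _ => ?_
  have hXi := hX.re_dotProduct_nonneg (u i)
  have hYi := hY.re_dotProduct_nonneg (u i)
  rw [hB.eigenvalues_eq i, sub_mulVec, dotProduct_sub, map_sub]
  exact (abs_sub _ _).trans_eq (by rw [abs_of_nonneg hXi, abs_of_nonneg hYi]; rfl)

end TraceNorm

end Matrix

section PartialTrace

variable {d : ℕ}

lemma ptraceB_eq_sum_submatrix (M : Matrix (Fin d × Fin d) (Fin d × Fin d) ℂ) :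
    ptraceB M = ∑ j, M.submatrix (·, j) (·, j) := by
  ext i i'
  simp [ptraceB, Matrix.sum_apply]

lemma ptraceB_sub (M N : Matrix (Fin d × Fin d) (Fin d × Fin d) ℂ) :
    ptraceB (M - N) = ptraceB M - ptraceB N := by
  ext i i'
  simp [ptraceB, Finset.sum_sub_distrib]

lemma trace_ptraceB (M : Matrix (Fin d × Fin d) (Fin d × Fin d) ℂ) :
    (ptraceB M).trace = M.trace := by
  simp [ptraceB, Matrix.trace, Fintype.sum_prod_type]

lemma posSemidef_ptraceB {M : Matrix (Fin d × Fin d) (Fin d × Fin d) ℂ}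
    (hM : M.PosSemidef) : (ptraceB M).PosSemidef := by
  rw [ptraceB_eq_sum_submatrix]
  exact posSemidef_sum _ fun j _ => hM.submatrix _

lemma ptraceB_vecMulVec_entries (R : Matrix (Fin d) (Fin d) ℂ) :
    ptraceB (vecMulVec (fun p => R p.1 p.2) (star fun p => R p.1 p.2)) = R * Rᴴ := by
  ext i i'
  simp [ptraceB, vecMulVec_apply, mul_apply]

open scoped MatrixOrder in
lemma Matrix.PosSemidef.exists_purification {σ : Matrix (Fin d) (Fin d) ℂ} (hσ : σ.PosSemidef) :
    ∃ φ : Fin d × Fin d → ℂ, ptraceB (vecMulVec φ (star φ)) = σ ∧ star φ ⬝ᵥ φ = σ.trace := by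
  obtain ⟨B, rfl⟩ := CStarAlgebra.nonneg_iff_eq_star_mul_self.mp hσ.nonneg
  have hpur := ptraceB_vecMulVec_entries Bᴴ
  rw [conjTranspose_conjTranspose] at hpur
  refine ⟨_, hpur, ?_⟩
  rw [dotProduct_comm, ← trace_vecMulVec, ← trace_ptraceB, hpur]
  rfl

end PartialTrace

theorem hnet_partial_trace_covering_general
    (d : ℕ) (ε : ℝ) (hε0 : 0 < ε)
    (h : ℝ) (hh : h = Real.sqrt (1 - ε ^ 2))
    (P : Finset (Fin d × Fin d → ℂ))
    (hPunit : ∀ ψ ∈ P, star ψ ⬝ᵥ ψ = 1)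
    (hPnet : ∀ φ : Fin d × Fin d → ℂ, star φ ⬝ᵥ φ = 1 →
      ∃ ψ ∈ P, h ≤ ‖star ψ ⬝ᵥ φ‖)
    (D : Finset (Matrix (Fin d) (Fin d) ℂ))
    (hD : D = P.image fun ψ => ptraceB (Matrix.vecMulVec ψ (star ψ))) :
    (∀ σ : Matrix (Fin d) (Fin d) ℂ, σ.PosSemidef → σ.trace = 1 →
        ∃ ρ ∈ D, (1 / 2 : ℝ) * (ρ - σ).traceNorm ≤ ε) ∧
      D.card ≤ P.card := by
  refine ⟨fun σ hσ hσtr => ?_, hD ▸ Finset.card_image_le⟩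
  obtain ⟨φ, hφσ, hφ⟩ := hσ.exists_purification
  rw [hσtr] at hφ
  obtain ⟨ψ, hψP, hψφ⟩ := hPnet φ hφ
  obtain ⟨X, Y, hX, hY, hXY, htr⟩ := exists_posSemidef_sub_eq_vecMulVec_sub (hPunit ψ hψP) hφ
  refine ⟨_, hD ▸ Finset.mem_image_of_mem _ hψP, ?_⟩
  have hfid : 1 - ‖star ψ ⬝ᵥ φ‖ ^ 2 ≤ ε ^ 2 := by
    have := (Real.sqrt_le_left (norm_nonneg _)).mp (hh ▸ hψφ)
    linarith
  calc (1 / 2 : ℝ) * (ptraceB (vecMulVec ψ (star ψ)) - σ).traceNorm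
      = (1 / 2 : ℝ) * (ptraceB X - ptraceB Y).traceNorm := by
        rw [← hφσ, ← ptraceB_sub, hXY, ptraceB_sub]
    _ ≤ (1 / 2 : ℝ) * ((ptraceB X).trace.re + (ptraceB Y).trace.re) := by
        gcongr
        exact traceNorm_sub_le (posSemidef_ptraceB hX) (posSemidef_ptraceB hY)
    _ = √(1 - ‖star ψ ⬝ᵥ φ‖ ^ 2) := by
        rw [trace_ptraceB, trace_ptraceB, ← Complex.add_re, ← trace_add, htr]
        simp
    _ ≤ ε := Real.sqrt_le_iff.mpr ⟨hε0.le, hfid⟩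

/-- **Partial-tracing an `h`-net of purifications gives an `ε`-covering of density matrices.**
Let `0 < ε < 1` and `h = √(1 − ε²)`.  If `P` is a finite set of unit vectors in
`ℂ^{d·d}` such that every unit vector `φ` has some `ψ ∈ P` with `|ψᴴ φ| ≥ h`, then
`D = {tr_B(ψψᴴ) : ψ ∈ P}` is an `ε`-covering set of density matrices in trace distance:
every PSD `σ` with `tr σ = 1` has some `ρ ∈ D` with `(1/2)‖ρ − σ‖₁ ≤ ε`; moreover
`|D| ≤ |P|`. -/
theorem hnet_partial_trace_covering
    (d : ℕ) (hd : 1 ≤ d) (ε : ℝ) (hε0 : 0 < ε) (hε1 : ε < 1)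
    (h : ℝ) (hh : h = Real.sqrt (1 - ε ^ 2))
    (P : Finset (Fin d × Fin d → ℂ))
    (hPunit : ∀ ψ ∈ P, star ψ ⬝ᵥ ψ = 1)
    (hPnet : ∀ φ : Fin d × Fin d → ℂ, star φ ⬝ᵥ φ = 1 →
      ∃ ψ ∈ P, h ≤ ‖star ψ ⬝ᵥ φ‖)
    (D : Finset (Matrix (Fin d) (Fin d) ℂ))
    (hD : D = P.image fun ψ => ptraceB (Matrix.vecMulVec ψ (star ψ))) :
    (∀ σ : Matrix (Fin d) (Fin d) ℂ, σ.PosSemidef → σ.trace = 1 →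
        ∃ ρ ∈ D, (1 / 2 : ℝ) * (ρ - σ).traceNorm ≤ ε) ∧
      D.card ≤ P.card :=
  hnet_partial_trace_covering_general d ε hε0 h hh P hPunit hPnet D hD
end
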